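/- Let G be a finite abelian group and let H and K be subgroups of G. Then T_{G/H}(e_K) = ((G:H)·|K∩H|/|K|) · e_{K∩H} in ℂ[H]; equivalently, (G:K)⁻¹ · T_{G/H}(e_K) = (H : K∩H)⁻¹ · e_{K∩H}. Here e_K = |K|⁻¹ ∑_{k∈K} k ∈ ℂ[G] and e_{K∩H} = |K∩H|⁻¹ ∑_{x∈K∩H} x is viewed as an element of ℂ[H] (K∩H being a subgroup of H). -/

import Mathlib

/-- For a subgroup `K` of a group `Γ`, the idempotent `e_K := |K|⁻¹ ∑_{k ∈ K} k` of the group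
algebra `ℂ[Γ]`. -/
noncomputable def grpIdem (Γ : Type*) [CommGroup Γ] (K : Subgroup Γ) : MonoidAlgebra ℂ Γ :=
  (Nat.card K : ℂ)⁻¹ • ∑ᶠ k : K, MonoidAlgebra.of ℂ Γ (k : Γ)

/-- The trace map `T_{G/H} : ℂ[G] → ℂ[H]`: the trace, over `ℂ[H]`, of the `ℂ[H]`-linear
endomorphism of `ℂ[G]` given by multiplication by `λ`, where `ℂ[G]` is a `ℂ[H]`-module via
the inclusion-induced ring homomorphism `ℂ[H] → ℂ[G]`. -/
noncomputable def grpTrace (G : Type*) [CommGroup G] (H : Subgroup G)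
    (lam : MonoidAlgebra ℂ G) : MonoidAlgebra ℂ ↥H :=
  letI : Algebra (MonoidAlgebra ℂ ↥H) (MonoidAlgebra ℂ G) :=
    (MonoidAlgebra.mapDomainRingHom ℂ H.subtype).toAlgebra
  LinearMap.trace (MonoidAlgebra ℂ ↥H) (MonoidAlgebra ℂ G)
    (LinearMap.mulLeft (MonoidAlgebra ℂ ↥H) lam)

/-!
The coset representatives `q.out` form a `ℂ[H]`-basis of `ℂ[G]`, and `g * q.out` is an
`H`-multiple of the representative of `gq`. So multiplication by `g` has diagonal entries `g`
when `g ∈ H` and `0` otherwise: `T_{G/H}(g) = (G:H) • g` on `H` and vanishes off `H`. Summing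
over `K` leaves `(G:H) • ∑_{K ∩ H} x`, and the rest is bookkeeping of the normalisations.
-/

open MonoidAlgebra

namespace MonoidAlgebra

variable (k : Type*) {G : Type*} [CommRing k] [CommGroup G] (H : Subgroup G)

noncomputable abbrev algebraOfSubgroup : Algebra (MonoidAlgebra k H) (MonoidAlgebra k G) :=
  (mapDomainRingHom k H.subtype).toAlgebra

attribute [local instance] algebraOfSubgroup

instance : IsScalarTower k (MonoidAlgebra k H) (MonoidAlgebra k G) :=
  IsScalarTower.of_algebraMap_eq fun c => by simp [RingHom.algebraMap_toAlgebra]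

lemma algebraMap_of (h : H) :
    algebraMap (MonoidAlgebra k H) (MonoidAlgebra k G) (of k H h) = of k G h := by
  simp [RingHom.algebraMap_toAlgebra]

lemma coeff_smul_of_mul (a : MonoidAlgebra k H) (g : G) (h : H) :
    (a • of k G g).coeff (h * g) = a.coeff h := by
  rw [Algebra.smul_def, RingHom.algebraMap_toAlgebra, of_apply, coeff_mul_single_apply,
    mul_one, mul_inv_cancel_right]
  exact Finsupp.mapDomain_apply Subtype.val_injective _ h

lemma coeff_smul_of_of_notMem (a : MonoidAlgebra k H) {g x : G} (hx : x * g⁻¹ ∉ H) :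
    (a • of k G g).coeff x = 0 := by
  rw [Algebra.smul_def, RingHom.algebraMap_toAlgebra, of_apply, coeff_mul_single_apply, mul_one]
  exact Finsupp.mapDomain_of_notMem_range _ _ (by simpa using hx)

lemma exists_of_eq_smul_of_out (g : G) :
    ∃ h : H, of k G g = of k H h • of k G (g : G ⧸ H).out := by
  obtain ⟨h, hh⟩ := QuotientGroup.mk_out_eq_mul H g
  refine ⟨h⁻¹, ?_⟩
  rw [Algebra.smul_def, algebraMap_of, hh, ← map_mul]
  simp

lemma linearIndependent_of_out :
    LinearIndependent (MonoidAlgebra k H) fun q : G ⧸ H => of k G q.out := by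
  refine linearIndependent_iff'.2 fun s c hc q hq => ext <| Finsupp.ext fun h => ?_
  have hcoeff := congr(($hc).coeff ((h : G) * q.out))
  rw [coeff_sum, Finset.sum_apply', Finset.sum_eq_single q, coeff_smul_of_mul] at hcoeff
  · exact hcoeff
  · intro q' _ hq'
    refine coeff_smul_of_of_notMem k H _ fun hmem => hq' ?_
    have hone := (QuotientGroup.eq_one_iff (N := H) _).2 hmem
    simp only [QuotientGroup.mk_mul, QuotientGroup.mk_inv, QuotientGroup.out_eq',
      (QuotientGroup.eq_one_iff _).2 h.2, one_mul, mul_inv_eq_one] at hone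
    exact hone.symm
  · exact absurd hq

lemma top_le_span_range_of_out :
    ⊤ ≤ Submodule.span (MonoidAlgebra k H) (Set.range fun q : G ⧸ H => of k G q.out) := by
  rintro x -
  induction x using induction_linear with
  | zero => exact zero_mem _
  | add x y hx hy => exact add_mem hx hy
  | single g r =>
    obtain ⟨h, hh⟩ := exists_of_eq_smul_of_out k H g
    have hsingle : single g r = r • of k G g := by simp
    rw [hsingle, hh]
    exact Submodule.smul_of_tower_mem _ r
      (Submodule.smul_mem _ _ (Submodule.subset_span ⟨_, rfl⟩))

noncomputable def cosetBasis : Module.Basis (G ⧸ H) (MonoidAlgebra k H) (MonoidAlgebra k G) :=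
  .mk (linearIndependent_of_out k H) (top_le_span_range_of_out k H)

lemma cosetBasis_apply (q : G ⧸ H) : cosetBasis k H q = of k G q.out := Module.Basis.mk_apply ..

theorem _root_.grpTrace_eq_trace (lam : MonoidAlgebra ℂ G) :
    grpTrace G H lam = Algebra.trace (MonoidAlgebra ℂ H) (MonoidAlgebra ℂ G) lam := rfl

variable [Finite (G ⧸ H)]

theorem trace_of_mem (h : H) :
    Algebra.trace (MonoidAlgebra k H) (MonoidAlgebra k G) (of k G h) =
      Nat.card (G ⧸ H) • of k H h := by
  have := Fintype.ofFinite (G ⧸ H)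
  rw [← algebraMap_of, Algebra.trace_algebraMap_of_basis (cosetBasis k H),
    Nat.card_eq_fintype_card]

theorem trace_of_of_notMem {g : G} (hg : g ∉ H) :
    Algebra.trace (MonoidAlgebra k H) (MonoidAlgebra k G) (of k G g) = 0 := by
  classical
  have := Fintype.ofFinite (G ⧸ H)
  rw [Algebra.trace_eq_matrix_trace (cosetBasis k H)]
  refine Finset.sum_eq_zero fun q _ => ?_
  obtain ⟨h, hh⟩ := exists_of_eq_smul_of_out k H (g * q.out)
  have hne : ((g * q.out : G) : G ⧸ H) ≠ q := by
    rwa [QuotientGroup.mk_mul, QuotientGroup.out_eq', Ne, mul_eq_right, QuotientGroup.eq_one_iff]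
  rw [Matrix.diag_apply, Algebra.leftMulMatrix_eq_repr_mul, cosetBasis_apply, ← map_mul, hh,
    ← cosetBasis_apply, map_smul, Module.Basis.repr_self, Finsupp.smul_apply,
    Finsupp.single_eq_of_ne' hne, smul_zero]

theorem trace_finsum_of_subgroup (K : Subgroup G) [Finite K] :
    Algebra.trace (MonoidAlgebra k H) (MonoidAlgebra k G) (∑ᶠ x : K, of k G x) =
      Nat.card (G ⧸ H) • ∑ᶠ y : K.subgroupOf H, of k H y := by
  let incl : K.subgroupOf H → K := fun y => ⟨y, y.2⟩
  have hincl : Function.Injective incl := fun y y' h => Subtype.ext (Subtype.ext congr(($h : G)))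
  have := Fintype.ofFinite K
  have := Finite.of_injective incl hincl
  have := Fintype.ofFinite (K.subgroupOf H)
  rw [finsum_eq_sum_of_fintype, finsum_eq_sum_of_fintype, map_sum, Finset.smul_sum]
  symm
  refine Fintype.sum_of_injective incl hincl _ _ (fun x hx => ?_) fun y => ?_
  · exact trace_of_of_notMem k H fun hxH => hx ⟨⟨⟨x, hxH⟩, x.2⟩, rfl⟩
  · exact (trace_of_mem k H (y : H)).symm

end MonoidAlgebra

theorem Subgroup.card_subgroupOf {G : Type*} [Group G] (K H : Subgroup G) :
    Nat.card (K.subgroupOf H) = Nat.card ↥(K ⊓ H) := by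
  rw [← Subgroup.inf_subgroupOf_right]
  exact Nat.card_congr (Subgroup.subgroupOfEquivOfLe inf_le_right).toEquiv

/-- Let `G` be a finite abelian group and `H, K ≤ G`.  Then
`T_{G/H}(e_K) = ((G:H)·|K∩H|/|K|) · e_{K∩H}` in `ℂ[H]`, where `e_{K∩H}` is the idempotent of
the subgroup `K ∩ H` of `H`. -/
theorem stmt10 (G : Type*) [CommGroup G] [Finite G] (H K : Subgroup G) :
    grpTrace G H (grpIdem G K) =
      (((Nat.card (G ⧸ H) : ℂ) * (Nat.card ↥(K ⊓ H) : ℂ)) / (Nat.card K : ℂ)) •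
        grpIdem ↥H (K.subgroupOf H) := by
  let := MonoidAlgebra.algebraOfSubgroup ℂ H
  have hcard : (Nat.card (K.subgroupOf H) : ℂ) ≠ 0 := Nat.cast_ne_zero.2 Nat.card_pos.ne'
  rw [grpTrace_eq_trace, grpIdem, grpIdem, LinearMap.map_smul_of_tower,
    MonoidAlgebra.trace_finsum_of_subgroup, ← Subgroup.card_subgroupOf,
    ← Nat.cast_smul_eq_nsmul ℂ, smul_smul, smul_smul]
  congr 1
  field_simp
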